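/- If Z ~ Beta(1/2, (n−2)/2) with n > 3 an integer, then for any 0 < ε < 1/2 there exist constants 0 < M₁(ε) < 1/4 and M₂(ε) > 3, independent of n, such that P(Z < M₁/n) < ε and P(Z > M₂/n) < ε. In particular one can take M₁ = (ε/(ε+1))² and M₂ = 6·log(5/ε). -/
import Mathlib


open MeasureTheory Real

/-- The Beta function `B(a,b) = Γ(a)Γ(b)/Γ(a+b)`. -/
noncomputable def betaFun (a b : ℝ) : ℝ := Real.Gamma a * Real.Gamma b / Real.Gamma (a + b)

/-- The density of the Beta(a,b) distribution on `[0,1]`. -/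
noncomputable def betaPDF (a b x : ℝ) : ℝ :=
  if x ∈ Set.Icc (0 : ℝ) 1 then x ^ (a - 1) * (1 - x) ^ (b - 1) / betaFun a b else 0

lemma gamma_half_add_le {b : ℝ} (hb : 0 < b) :
    Real.Gamma (1/2 + b) ≤ Real.Gamma b * Real.sqrt b := by
  have hb1 : (0:ℝ) < b + 1 := by linarith
  have h := Real.convexOn_log_Gamma.2 (Set.mem_Ioi.mpr hb) (Set.mem_Ioi.mpr hb1)
    (by norm_num : (0:ℝ) ≤ 1/2) (by norm_num : (0:ℝ) ≤ 1/2) (by norm_num)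
  have hmid : (1/2 : ℝ) • b + (1/2 : ℝ) • (b+1) = 1/2 + b := by
    simp only [smul_eq_mul]; ring
  rw [hmid] at h
  simp only [Function.comp_apply, smul_eq_mul] at h
  have hG1 : Real.Gamma (b+1) = b * Real.Gamma b := Real.Gamma_add_one hb.ne'
  have hGb : 0 < Real.Gamma b := Real.Gamma_pos_of_pos hb
  have hsb : 0 < Real.sqrt b := Real.sqrt_pos.mpr hb
  have key : Real.log (Real.Gamma (1/2+b)) ≤ Real.log (Real.Gamma b * Real.sqrt b) := by
    rw [Real.log_mul hGb.ne' hsb.ne', Real.log_sqrt hb.le]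
    calc Real.log (Real.Gamma (1/2+b)) ≤ 1/2 * Real.log (Real.Gamma b)
          + 1/2 * Real.log (Real.Gamma (b+1)) := h
      _ = Real.log (Real.Gamma b) + Real.log b / 2 := by
          rw [hG1, Real.log_mul hb.ne' hGb.ne']; ring
  exact (Real.log_le_log_iff (Real.Gamma_pos_of_pos (by linarith)) (by positivity)).1 key

lemma betaFun_pos' {b : ℝ} (hb : 0 < b) : 0 < betaFun (1/2) b := by
  unfold betaFun
  have := Real.Gamma_pos_of_pos (show (0:ℝ) < 1/2 by norm_num)
  have := Real.Gamma_pos_of_pos hb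
  have := Real.Gamma_pos_of_pos (show (0:ℝ) < 1/2 + b by linarith)
  positivity

lemma betaFun_ge {b : ℝ} (hb : 0 < b) :
    Real.sqrt π / Real.sqrt b ≤ betaFun (1/2) b := by
  have hGb : 0 < Real.Gamma b := Real.Gamma_pos_of_pos hb
  have hsb : 0 < Real.sqrt b := Real.sqrt_pos.mpr hb
  have hG : 0 < Real.Gamma (1/2 + b) := Real.Gamma_pos_of_pos (by linarith)
  have h := gamma_half_add_le hb
  unfold betaFun
  rw [Real.Gamma_one_half_eq]
  rw [div_le_div_iff₀ hsb hG]
  calc Real.sqrt π * Real.Gamma (1/2+b) ≤ Real.sqrt π * (Real.Gamma b * Real.sqrt b) := by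
        exact mul_le_mul_of_nonneg_left h (Real.sqrt_nonneg _)
    _ = Real.sqrt π * Real.Gamma b * Real.sqrt b := by ring

lemma contOn_g (b : ℝ) (hb : 1 ≤ b) {S : Set ℝ} (hS : ∀ x ∈ S, x ≠ 0) :
    ContinuousOn (fun x : ℝ => x ^ (1/2 - 1 : ℝ) * (1 - x) ^ (b - 1)) S := fun x hx =>
  ((Real.continuousAt_rpow_const x _ (Or.inl (hS x hx))).mul
    (((continuous_const.sub continuous_id).continuousAt).rpow_const
      (Or.inr (by linarith)))).continuousWithinAt

lemma betaPDF_eq (b : ℝ) : betaPDF (1/2) b =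
    Set.indicator (Set.Icc (0:ℝ) 1)
      (fun x => x ^ (1/2 - 1 : ℝ) * (1 - x) ^ (b - 1) / betaFun (1/2) b) := by
  funext x
  simp [betaPDF, Set.indicator_apply]

lemma integrableOn_rpow_half (t : ℝ) (ht : 0 ≤ t) :
    IntegrableOn (fun x : ℝ => x ^ (1/2 - 1 : ℝ)) (Set.Ioc 0 t) := by
  have h := intervalIntegral.intervalIntegrable_rpow' (a := 0) (b := t)
    (show (-1:ℝ) < 1/2 - 1 by norm_num)
  rwa [intervalIntegrable_iff_integrableOn_Ioc_of_le ht] at h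

lemma integrableOn_g (b t : ℝ) (hb : 1 ≤ b) (ht0 : 0 ≤ t) (ht1 : t ≤ 1) :
    IntegrableOn (fun x : ℝ => x ^ (1/2 - 1 : ℝ) * (1 - x) ^ (b - 1)) (Set.Ioc 0 t) := by
  refine (integrableOn_rpow_half t ht0).mono'
    ((contOn_g b hb (fun x hx => hx.1.ne')).aestronglyMeasurable measurableSet_Ioc) ?_
  filter_upwards [ae_restrict_mem measurableSet_Ioc] with x hx
  have hx0 : 0 < x := hx.1
  have hx1 : x ≤ 1 := hx.2.trans ht1
  rw [Real.norm_eq_abs, abs_of_nonneg (mul_nonneg (Real.rpow_nonneg hx0.le _)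
    (Real.rpow_nonneg (by linarith) _))]
  have h1 : (1 - x) ^ (b - 1) ≤ 1 :=
    Real.rpow_le_one (by linarith) (by linarith) (by linarith)
  calc x ^ (1/2 - 1 : ℝ) * (1 - x) ^ (b - 1) ≤ x ^ (1/2 - 1 : ℝ) * 1 :=
        mul_le_mul_of_nonneg_left h1 (Real.rpow_nonneg hx0.le _)
    _ = x ^ (1/2 - 1 : ℝ) := mul_one _

lemma int_rpow_half (t : ℝ) (ht : 0 ≤ t) :
    ∫ x in Set.Ioc 0 t, (x : ℝ) ^ (1/2 - 1 : ℝ) = 2 * Real.sqrt t := by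
  rw [← intervalIntegral.integral_of_le ht,
    integral_rpow (Or.inl (by norm_num : (-1:ℝ) < 1/2 - 1)),
    show (1/2 - 1 + 1 : ℝ) = 1/2 by norm_num,
    Real.zero_rpow (by norm_num : (1/2 : ℝ) ≠ 0), ← Real.sqrt_eq_rpow]
  ring

lemma tail_lower (b t : ℝ) (hb : 1 ≤ b) (ht0 : 0 < t) (ht1 : t ≤ 1) :
    ∫ x in Set.Iio t, betaPDF (1/2) b x ≤ 2 * Real.sqrt t / betaFun (1/2) b := by
  have hB : 0 < betaFun (1/2) b := betaFun_pos' (by linarith)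
  have hset : Set.Iio t ∩ Set.Icc (0:ℝ) 1 = Set.Ico 0 t := by
    ext x
    simp only [Set.mem_inter_iff, Set.mem_Iio, Set.mem_Icc, Set.mem_Ico]
    constructor
    · rintro ⟨h1, h2, h3⟩; exact ⟨h2, h1⟩
    · rintro ⟨h1, h2⟩; exact ⟨h2, h1, le_trans h2.le ht1⟩
  rw [betaPDF_eq, setIntegral_indicator measurableSet_Icc, hset,
    integral_Ico_eq_integral_Ioo, ← integral_Ioc_eq_integral_Ioo, integral_div]
  rw [div_le_div_iff_of_pos_right hB]
  calc (∫ x in Set.Ioc 0 t, x ^ (1/2 - 1 : ℝ) * (1 - x) ^ (b - 1))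
      ≤ ∫ x in Set.Ioc 0 t, x ^ (1/2 - 1 : ℝ) := by
        refine setIntegral_mono_on (integrableOn_g b t hb ht0.le ht1)
          (integrableOn_rpow_half t ht0.le) measurableSet_Ioc (fun x hx => ?_)
        have hx0 : 0 < x := hx.1
        have hx1 : x ≤ 1 := hx.2.trans ht1
        calc x ^ (1/2 - 1 : ℝ) * (1 - x) ^ (b - 1) ≤ x ^ (1/2 - 1 : ℝ) * 1 :=
              mul_le_mul_of_nonneg_left
                (Real.rpow_le_one (by linarith) (by linarith) (by linarith))
                (Real.rpow_nonneg hx0.le _)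
          _ = x ^ (1/2 - 1 : ℝ) := mul_one _
    _ = 2 * Real.sqrt t := int_rpow_half t ht0.le

lemma tail_upper (b t : ℝ) (hb : 1 ≤ b) (ht0 : 0 < t) (ht1 : t < 1) :
    ∫ x in Set.Ioi t, betaPDF (1/2) b x
      ≤ t ^ (1/2 - 1 : ℝ) * ((1 - t) ^ b / b) / betaFun (1/2) b := by
  have hb0 : (0:ℝ) < b := by linarith
  have hB : 0 < betaFun (1/2) b := betaFun_pos' hb0
  have hset : Set.Ioi t ∩ Set.Icc (0:ℝ) 1 = Set.Ioc t 1 := by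
    ext x
    simp only [Set.mem_inter_iff, Set.mem_Ioi, Set.mem_Icc, Set.mem_Ioc]
    constructor
    · rintro ⟨h1, h2, h3⟩; exact ⟨h1, h3⟩
    · rintro ⟨h1, h2⟩; exact ⟨h1, (ht0.trans h1).le, h2⟩
  rw [betaPDF_eq, setIntegral_indicator measurableSet_Icc, hset, integral_div]
  rw [div_le_div_iff_of_pos_right hB]
  have hcont : ContinuousOn (fun x : ℝ => (1 - x) ^ (b - 1)) (Set.Icc t 1) :=
    fun x _ => (((continuous_const.sub continuous_id).continuousAt).rpow_const
      (Or.inr (by linarith))).continuousWithinAt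
  have hint2 : IntegrableOn (fun x : ℝ => (1 - x) ^ (b - 1)) (Set.Ioc t 1) :=
    (hcont.integrableOn_compact isCompact_Icc).mono_set Set.Ioc_subset_Icc_self
  have hintg : IntegrableOn
      (fun x : ℝ => x ^ (1/2 - 1 : ℝ) * (1 - x) ^ (b - 1)) (Set.Ioc t 1) := by
    refine (hint2.const_mul (t ^ (1/2 - 1 : ℝ))).mono'
      ((contOn_g b hb (fun x hx => (ht0.trans hx.1).ne')).aestronglyMeasurable
        measurableSet_Ioc) ?_
    filter_upwards [ae_restrict_mem measurableSet_Ioc] with x hx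
    have hx0 : 0 < x := ht0.trans hx.1
    rw [Real.norm_eq_abs, abs_of_nonneg
      (mul_nonneg (Real.rpow_nonneg hx0.le _) (Real.rpow_nonneg (by linarith [hx.2]) _))]
    exact mul_le_mul_of_nonneg_right
      (Real.rpow_le_rpow_of_nonpos ht0 hx.1.le (by norm_num))
      (Real.rpow_nonneg (by linarith [hx.2]) _)
  calc (∫ x in Set.Ioc t 1, x ^ (1/2 - 1 : ℝ) * (1 - x) ^ (b - 1))
      ≤ ∫ x in Set.Ioc t 1, t ^ (1/2 - 1 : ℝ) * (1 - x) ^ (b - 1) := by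
        refine setIntegral_mono_on hintg (hint2.const_mul _) measurableSet_Ioc
          (fun x hx => ?_)
        exact mul_le_mul_of_nonneg_right
          (Real.rpow_le_rpow_of_nonpos ht0 hx.1.le (by norm_num))
          (Real.rpow_nonneg (by linarith [hx.2]) _)
    _ = t ^ (1/2 - 1 : ℝ) * ∫ x in Set.Ioc t 1, (1 - x) ^ (b - 1) := by
        rw [integral_const_mul]
    _ = t ^ (1/2 - 1 : ℝ) * ((1 - t) ^ b / b) := by
        rw [← intervalIntegral.integral_of_le ht1.le]
        rw [show (fun x : ℝ => (1 - x) ^ (b - 1)) = fun x : ℝ => (fun u : ℝ => u ^ (b-1)) (1 - x)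
          from rfl]
        rw [intervalIntegral.integral_comp_sub_left (fun u : ℝ => u ^ (b-1)) 1]
        rw [show (1:ℝ) - 1 = 0 by ring]
        rw [integral_rpow (Or.inl (by linarith : (-1:ℝ) < b - 1))]
        rw [show b - 1 + 1 = b by ring, Real.zero_rpow hb0.ne']
        ring

lemma tail_upper_trivial (b t : ℝ) (ht : 1 ≤ t) :
    ∫ x in Set.Ioi t, betaPDF (1/2) b x = 0 := by
  rw [betaPDF_eq, setIntegral_indicator measurableSet_Icc]
  have hset : Set.Ioi t ∩ Set.Icc (0:ℝ) 1 = ∅ := by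
    ext x
    simp only [Set.mem_inter_iff, Set.mem_Ioi, Set.mem_Icc, Set.mem_empty_iff_false, iff_false,
      not_and]
    intro h1 h2 h3
    linarith
  rw [hset, setIntegral_empty]

/-- If `Z ~ Beta(1/2, (n−2)/2)` with integer `n > 3`, then for any `0 < ε < 1/2`
there are constants `0 < M₁ < 1/4` and `M₂ > 3`, independent of `n`
(one can take `M₁ = (ε/(ε+1))²` and `M₂ = 6 log(5/ε)`), such that
`P(Z < M₁/n) < ε` and `P(Z > M₂/n) < ε`. -/
theorem beta_exact_rate (ε : ℝ) (hε0 : 0 < ε) (hε2 : ε < 1 / 2) :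
    ∃ M₁ M₂ : ℝ, 0 < M₁ ∧ M₁ < 1 / 4 ∧ 3 < M₂ ∧
      M₁ = (ε / (ε + 1)) ^ 2 ∧ M₂ = 6 * Real.log (5 / ε) ∧
      ∀ n : ℕ, 3 < n →
        (∫ x in Set.Iio (M₁ / n), betaPDF (1 / 2) (((n : ℝ) - 2) / 2) x) < ε ∧
        (∫ x in Set.Ioi (M₂ / n), betaPDF (1 / 2) (((n : ℝ) - 2) / 2) x) < ε := by
  set M₁ : ℝ := (ε / (ε + 1)) ^ 2 with hM₁
  set M₂ : ℝ := 6 * Real.log (5 / ε) with hM₂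
  have hε1 : (0:ℝ) < ε + 1 := by linarith
  have hM1pos : 0 < M₁ := by positivity
  have hM1eps : M₁ ≤ ε ^ 2 := by
    rw [hM₁, div_pow]
    exact div_le_self (sq_nonneg _) (by nlinarith)
  have hM1lt : M₁ < 1/4 := by
    have h : ε / (ε + 1) < 1/2 := by rw [div_lt_iff₀ hε1]; linarith
    have h0 : 0 ≤ ε / (ε + 1) := by positivity
    rw [hM₁]; nlinarith
  have hlog1 : 1 < Real.log (5 / ε) := by
    rw [Real.lt_log_iff_exp_lt (by positivity)]
    have h10 : (10:ℝ) < 5 / ε := by rw [lt_div_iff₀ hε0]; nlinarith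
    have := Real.exp_one_lt_d9
    linarith
  have hM2gt : 6 < M₂ := by rw [hM₂]; linarith
  have hsqrtpi : (1:ℝ) ≤ Real.sqrt π := by
    rw [show (1:ℝ) = Real.sqrt 1 from (Real.sqrt_one).symm]
    exact Real.sqrt_le_sqrt (by linarith [Real.pi_gt_three])
  refine ⟨M₁, M₂, hM1pos, hM1lt, by linarith, rfl, rfl, fun n hn => ?_⟩
  have hn4 : (4:ℝ) ≤ (n:ℝ) := by exact_mod_cast hn
  have hnpos : (0:ℝ) < (n:ℝ) := by linarith
  set b : ℝ := ((n:ℝ) - 2) / 2 with hb_def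
  have hb : 1 ≤ b := by rw [hb_def]; linarith
  have hb0 : (0:ℝ) < b := by linarith
  have hB : 0 < betaFun (1/2) b := betaFun_pos' hb0
  have hBge : Real.sqrt π / Real.sqrt b ≤ betaFun (1/2) b := betaFun_ge hb0
  have hsb : 0 < Real.sqrt b := Real.sqrt_pos.mpr hb0
  constructor
  · -- lower tail
    set t : ℝ := M₁ / n with ht_def
    have ht0 : 0 < t := by positivity
    have ht1 : t ≤ 1 := by rw [ht_def, div_le_one hnpos]; linarith
    have htb : t * b ≤ M₁ / 2 := by
      rw [ht_def, hb_def, div_mul_div_comm, div_le_div_iff₀ (by positivity) two_pos]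
      nlinarith
    have hε2pos : (0:ℝ) < ε ^ 2 := by positivity
    have key : 2 * Real.sqrt t < ε * (Real.sqrt π / Real.sqrt b) := by
      rw [← mul_div_assoc, lt_div_iff₀ hsb, mul_assoc, ← Real.sqrt_mul ht0.le]
      have e1 : 2 * Real.sqrt (t * b) = Real.sqrt (4 * (t * b)) := by
        rw [show (4:ℝ) * (t * b) = 2^2 * (t * b) by ring,
          Real.sqrt_mul (by norm_num : (0:ℝ) ≤ 2^2) (t * b),
          Real.sqrt_sq (by norm_num : (0:ℝ) ≤ 2)]
      have e2 : ε * Real.sqrt π = Real.sqrt (ε^2 * π) := by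
        rw [Real.sqrt_mul (sq_nonneg ε) π, Real.sqrt_sq hε0.le]
      rw [e1, e2]
      exact Real.sqrt_lt_sqrt (by positivity) (by nlinarith [Real.pi_gt_three])
    calc (∫ x in Set.Iio t, betaPDF (1/2) b x) ≤ 2 * Real.sqrt t / betaFun (1/2) b :=
          tail_lower b t hb ht0 ht1
      _ < ε := by
          rw [div_lt_iff₀ hB]
          calc 2 * Real.sqrt t < ε * (Real.sqrt π / Real.sqrt b) := key
            _ ≤ ε * betaFun (1/2) b := mul_le_mul_of_nonneg_left hBge hε0.le
  · -- upper tail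
    set t : ℝ := M₂ / n with ht_def
    by_cases h1t : t < 1
    · have ht0 : 0 < t := div_pos (by linarith) hnpos
      have htb : M₂ / 4 ≤ t * b := by
        rw [ht_def, hb_def, div_mul_div_comm, div_le_div_iff₀ (by norm_num) (by positivity)]
        nlinarith
      have htb1 : 1 ≤ t * b := by linarith
      have hsqtb : 1 ≤ Real.sqrt (t * b) := by
        rw [show (1:ℝ) = Real.sqrt 1 from (Real.sqrt_one).symm]
        exact Real.sqrt_le_sqrt htb1
      have hexp : (1 - t) ^ b ≤ Real.exp (-(t * b)) := by
        rw [Real.rpow_def_of_pos (by linarith : (0:ℝ) < 1 - t)]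
        apply Real.exp_le_exp.2
        have hl := Real.log_le_sub_one_of_pos (show (0:ℝ) < 1 - t by linarith)
        calc Real.log (1 - t) * b ≤ (-t) * b :=
              mul_le_mul_of_nonneg_right (by linarith) hb0.le
          _ = -(t * b) := by ring
      have hfin : Real.exp (-(M₂ / 4)) < ε := by
        rw [← Real.exp_log hε0]
        apply Real.exp_lt_exp.2
        have hld : Real.log (5/ε) = Real.log 5 - Real.log ε :=
          Real.log_div (by norm_num) hε0.ne'
        have hlε : Real.log ε < 0 := Real.log_neg hε0 (by linarith)
        have hl5 : 0 < Real.log 5 := Real.log_pos (by norm_num)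
        rw [hM₂, hld]
        linarith
      have hu : (1 - t) ^ b < ε :=
        lt_of_le_of_lt (hexp.trans (Real.exp_le_exp.2 (by linarith))) hfin
      have h2 : Real.sqrt b * Real.sqrt b = b := Real.mul_self_sqrt hb0.le
      have h7 : Real.sqrt b ≤ b * Real.sqrt t := by
        have h5 : Real.sqrt b * 1 ≤ Real.sqrt b * Real.sqrt (t * b) :=
          mul_le_mul_of_nonneg_left hsqtb (Real.sqrt_nonneg b)
        have h6 : Real.sqrt b * Real.sqrt (t * b) = b * Real.sqrt t := by
          rw [Real.sqrt_mul ht0.le]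
          linear_combination Real.sqrt t * h2
        linarith [h5.trans_eq h6]
      have hA : t ^ (1/2 - 1 : ℝ) * ((1 - t) ^ b / b)
          = (1 - t) ^ b / (b * Real.sqrt t) := by
        rw [show (1/2 - 1 : ℝ) = -(1/2) by norm_num, Real.rpow_neg ht0.le,
          ← Real.sqrt_eq_rpow, inv_mul_eq_div, div_div]
      have key : t ^ (1/2 - 1 : ℝ) * ((1 - t) ^ b / b)
          < ε * (Real.sqrt π / Real.sqrt b) := by
        rw [hA, ← mul_div_assoc, div_lt_div_iff₀ (by positivity) hsb]
        have hupos : (0:ℝ) ≤ (1 - t) ^ b := Real.rpow_nonneg (by linarith) b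
        calc (1 - t) ^ b * Real.sqrt b < ε * Real.sqrt b :=
              mul_lt_mul_of_pos_right hu hsb
          _ ≤ ε * (b * Real.sqrt t) := mul_le_mul_of_nonneg_left h7 hε0.le
          _ = ε * 1 * (b * Real.sqrt t) := by ring
          _ ≤ ε * Real.sqrt π * (b * Real.sqrt t) := by
              apply mul_le_mul_of_nonneg_right ?_ (by positivity)
              exact mul_le_mul_of_nonneg_left hsqrtpi hε0.le
      calc (∫ x in Set.Ioi t, betaPDF (1/2) b x)
          ≤ t ^ (1/2 - 1 : ℝ) * ((1 - t) ^ b / b) / betaFun (1/2) b :=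
            tail_upper b t hb ht0 h1t
        _ < ε := by
            rw [div_lt_iff₀ hB]
            calc t ^ (1/2 - 1 : ℝ) * ((1 - t) ^ b / b)
                < ε * (Real.sqrt π / Real.sqrt b) := key
              _ ≤ ε * betaFun (1/2) b := mul_le_mul_of_nonneg_left hBge hε0.le
    · rw [tail_upper_trivial b t (not_lt.mp h1t)]
      exact hε0
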